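/- Let φ be a quaternionic modular form of weight ρ and level R. Assume that Cl(R) = R̂^× \ B̂^× / B^× is finite, fix representatives x₁, …, x_n ∈ B̂^× of the distinct double cosets, and assume that each Γ_{x_i} is finite and that each set Γ_{x_i, y} (y ∈ B̂^×) is finite. Then for every y ∈ B̂^×, φ(y) = Σ_{i=1}^{n} (1/t_{x_i}) · φ_{x_i, φ(x_i)}(y). -/

import Mathlib

open NumberField Quaternion IsDedekindDomain

noncomputable section

/-- The finite adele ring of a number field. -/
abbrev Adeles (F : Type*) [Field F] [NumberField F] : Type _ :=
  FiniteAdeleRing (𝓞 F) F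

/-- The adelization `B ⊗_F 𝔸`, modelled as a quaternion algebra over the adeles. -/
abbrev Bhat (F : Type*) [Field F] [NumberField F] (a b : F) : Type _ :=
  ℍ[Adeles F, algebraMap F (Adeles F) a, algebraMap F (Adeles F) b]

/-- The canonical quaternionic basis of `Bhat`. -/
def quatBasis (F : Type*) [Field F] [NumberField F] (a b : F) :
    QuaternionAlgebra.Basis (Bhat F a b) a 0 b where
  i := ⟨0, 1, 0, 0⟩
  j := ⟨0, 0, 1, 0⟩
  k := ⟨0, 0, 0, 1⟩
  i_mul_i := by
    ext <;> simp [QuaternionAlgebra.ext_iff, Algebra.smul_def] <;> rfl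
  j_mul_j := by
    ext <;> simp [QuaternionAlgebra.ext_iff, Algebra.smul_def] <;> rfl
  i_mul_j := by
    ext <;> simp
  j_mul_i := by
    ext <;> simp

/-- The canonical embedding `B → B̂`. -/
def iotaB (F : Type*) [Field F] [NumberField F] (a b : F) :
    ℍ[F, a, b] →ₐ[F] Bhat F a b :=
  (quatBasis F a b).liftHom

/-- The integral adeles `Ô` inside the finite adeles. -/
def intAdeles (F : Type*) [Field F] [NumberField F] : Set (Adeles F) :=
  {x | ∀ v : HeightOneSpectrum (𝓞 F), x v ∈ v.adicCompletionIntegers F}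

variable {F : Type*} [Field F] [NumberField F] {a b : F}

/-- `R̂`, the image of `R ⊗_𝒪 Ô` in `B̂`. -/
def Rhat (R : Subring ℍ[F, a, b]) : Subring (Bhat F a b) :=
  Subring.closure
    {z | ∃ r ∈ R, ∃ o ∈ intAdeles F,
      z = algebraMap (Adeles F) (Bhat F a b) o * iotaB F a b r}

/-- `R̂ˣ` as a subgroup of `B̂ˣ`. -/
def Uhat (R : Subring ℍ[F, a, b]) : Subgroup (Bhat F a b)ˣ :=
  (Units.map (Rhat R).subtype.toMonoidHom).range

/-- The embedding `B^× → B̂^×`. -/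
def gmap (F : Type*) [Field F] [NumberField F] (a b : F) :
    ℍ[F, a, b]ˣ →* (Bhat F a b)ˣ :=
  Units.map (iotaB F a b).toRingHom.toMonoidHom

/-- `𝒪^×` as a subgroup of `B^×`. -/
def OunitsB (F : Type*) [Field F] [NumberField F] (a b : F) : Subgroup ℍ[F, a, b]ˣ :=
  (Units.map ((algebraMap F ℍ[F, a, b]).comp (algebraMap (𝓞 F) F)).toMonoidHom).range

/-- The set `B^× ∩ x⁻¹ R̂^× y` (inside `B^×`). -/
def GammaSet (R : Subring ℍ[F, a, b]) (x y : (Bhat F a b)ˣ) : Set ℍ[F, a, b]ˣ :=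
  {γ | ∃ u ∈ Uhat R, gmap F a b γ = x⁻¹ * u * y}

/-- `T` is a (finite) set of representatives for `Γ_{x,y} = (B^× ∩ x⁻¹ R̂^× y)/𝒪^×`. -/
def IsGammaReps (R : Subring ℍ[F, a, b]) (x y : (Bhat F a b)ˣ)
    (T : Finset ℍ[F, a, b]ˣ) : Prop :=
  ↑T ⊆ GammaSet R x y ∧
    ∀ γ ∈ GammaSet R x y, ∃! γ' : ℍ[F, a, b]ˣ,
      γ' ∈ T ∧ ∃ ε ∈ OunitsB F a b, γ = γ' * ε

variable {V : Type*} [AddCommGroup V] [Module ℂ V]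

/-- `(V, act)` is a unitary right representation of `B^×/F^×`. -/
def IsWeightRep (F : Type*) [Field F] [NumberField F] (a b : F)
    (act : V → ℍ[F, a, b]ˣ → V) : Prop :=
  (∀ v, act v 1 = v) ∧
  (∀ v γ₁ γ₂, act (act v γ₁) γ₂ = act v (γ₁ * γ₂)) ∧
  (∀ γ, IsLinearMap ℂ (fun v => act v γ)) ∧
  (∀ (v : V) (c : Fˣ), act v (Units.map (algebraMap F ℍ[F, a, b]).toMonoidHom c) = v)

/-- `φ` is the quaternionic modular form `φ_{x,v}`. -/
def IsPhi (R : Subring ℍ[F, a, b]) (act : V → ℍ[F, a, b]ˣ → V)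
    (x : (Bhat F a b)ˣ) (v : V) (φ : (Bhat F a b)ˣ → V) : Prop :=
  ∀ y : (Bhat F a b)ˣ, ∃ T : Finset ℍ[F, a, b]ˣ,
    IsGammaReps R x y T ∧ φ y = ∑ γ ∈ T, act v γ

/-- `φ` is a quaternionic modular form of weight `act` and level `R`. -/
def IsQMF (R : Subring ℍ[F, a, b]) (act : V → ℍ[F, a, b]ˣ → V)
    (φ : (Bhat F a b)ˣ → V) : Prop :=
  ∀ u ∈ Uhat R, ∀ (γ : ℍ[F, a, b]ˣ) (y : (Bhat F a b)ˣ),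
    φ (u * y * gmap F a b γ) = act (φ y) γ

/-- `z` normalizes `R̂`. -/
def Normalizes (R : Subring ℍ[F, a, b]) (z : (Bhat F a b)ˣ) : Prop :=
  (fun w => ((z⁻¹ : (Bhat F a b)ˣ) : Bhat F a b) * w * (z : Bhat F a b)) ''
      ((Rhat R : Set (Bhat F a b))) = (Rhat R : Set (Bhat F a b))

/-- The order `R_x = B ∩ x⁻¹ R̂ x`. -/
def Rx (R : Subring ℍ[F, a, b]) (x : (Bhat F a b)ˣ) : Set ℍ[F, a, b] :=
  {w | ∃ r ∈ Rhat R, iotaB F a b w = ((x⁻¹ : (Bhat F a b)ˣ) : Bhat F a b) * r * (x : Bhat F a b)}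

/-- The unit group `R_x^×` inside `B^×`. -/
def RxUnits (R : Subring ℍ[F, a, b]) (x : (Bhat F a b)ˣ) : Set ℍ[F, a, b]ˣ :=
  {γ | ((γ : ℍ[F, a, b]) ∈ Rx R x) ∧ (((γ⁻¹ : ℍ[F, a, b]ˣ) : ℍ[F, a, b]) ∈ Rx R x)}

/-- `T` is a set of representatives for `Γ_x = R_x^×/𝒪^×`; in particular `t_x = T.card`. -/
def IsStabReps (R : Subring ℍ[F, a, b]) (x : (Bhat F a b)ˣ)
    (T : Finset ℍ[F, a, b]ˣ) : Prop :=
  ↑T ⊆ RxUnits R x ∧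
    ∀ γ ∈ RxUnits R x, ∃! γ' : ℍ[F, a, b]ˣ,
      γ' ∈ T ∧ ∃ ε ∈ OunitsB F a b, γ = γ' * ε

/-- `xs` is a set of representatives for `Cl(R) = R̂^× \ B̂^× / B^×`. -/
def IsClassReps (R : Subring ℍ[F, a, b]) (xs : Finset (Bhat F a b)ˣ) : Prop :=
  ∀ y : (Bhat F a b)ˣ, ∃! x : (Bhat F a b)ˣ,
    x ∈ xs ∧ ∃ u ∈ Uhat R, ∃ γ : ℍ[F, a, b]ˣ, y = u * x * gmap F a b γ

/-- The reduced norm of a quaternion over a commutative ring. -/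
def nrd {R : Type*} [CommRing R] {c₁ c₂ : R} (x : ℍ[R, c₁, c₂]) : R :=
  x.re ^ 2 - c₁ * x.imI ^ 2 - c₂ * x.imJ ^ 2 + c₁ * c₂ * x.imK ^ 2

/-- The set `H_𝔪 = {h ∈ B̂^× ∩ R̂ : Ô·n(h) ∩ 𝒪 = 𝔪}`. -/
def Hset (R : Subring ℍ[F, a, b]) (𝔪 : Ideal (𝓞 F)) : Set (Bhat F a b)ˣ :=
  {h | ((h : Bhat F a b) ∈ Rhat R) ∧
    {c : 𝓞 F | ∃ o ∈ intAdeles F,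
        algebraMap F (Adeles F) (algebraMap (𝓞 F) F c) = o * nrd (h : Bhat F a b)}
      = (𝔪 : Set (𝓞 F))}

/-- `T` is a set of representatives for the left cosets `R̂^× \ H_𝔪`. -/
def IsHeckeLeftReps (R : Subring ℍ[F, a, b]) (𝔪 : Ideal (𝓞 F))
    (T : Finset (Bhat F a b)ˣ) : Prop :=
  ↑T ⊆ Hset R 𝔪 ∧
    ∀ h ∈ Hset R 𝔪, ∃! h' : (Bhat F a b)ˣ, h' ∈ T ∧ ∃ u ∈ Uhat R, h = u * h'

/-- `T` is a set of representatives for the right cosets `H_𝔪 / R̂^×`. -/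
def IsHeckeRightReps (R : Subring ℍ[F, a, b]) (𝔪 : Ideal (𝓞 F))
    (T : Finset (Bhat F a b)ˣ) : Prop :=
  ↑T ⊆ Hset R 𝔪 ∧
    ∀ h ∈ Hset R 𝔪, ∃! h' : (Bhat F a b)ˣ, h' ∈ T ∧ ∃ u ∈ Uhat R, h = h' * u

end

/-!
The double coset of `y` picks out the unique representative `x` with `Γ_{x,y}` nonempty, and
`φ_{x,v}(y) = 0` for every other representative. For `γ ∈ Γ_{x,y}` the set `B^× ∩ x⁻¹ R̂^× y` is the
right translate `R_x^× γ`, so `Γ_{x,y}` and `Γ_x` have the same size `t_x`; modularity of `φ` gives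
`φ(x)·γ' = φ(y)` for every `γ'` in it, hence `φ_{x,φ(x)}(y) = t_x φ(y)`.
-/
section CosetReps

variable {G : Type*} [Group G]

/-- `IsGammaReps` and `IsStabReps` unfold to this with `Z = 𝒪^×`. -/
def IsCosetReps (Z : Subgroup G) (S : Set G) (T : Finset G) : Prop :=
  ↑T ⊆ S ∧ ∀ g ∈ S, ∃! t : G, t ∈ T ∧ ∃ z ∈ Z, g = t * z

namespace IsCosetReps

variable {Z : Subgroup G} {S : Set G} {T : Finset G}

theorem card_eq_ncard_image_mk (hT : IsCosetReps Z S T) :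
    T.card = ((↑) '' S : Set (G ⧸ Z)).ncard := by
  have hinj : Set.InjOn ((↑) : G → G ⧸ Z) T := by
    intro t₁ h₁ t₂ h₂ heq
    exact (hT.2 t₂ (hT.1 h₂)).unique ⟨h₁, t₁⁻¹ * t₂, QuotientGroup.eq.mp heq, by group⟩
      ⟨h₂, 1, one_mem Z, (mul_one t₂).symm⟩
  have himage : ((↑) '' (T : Set G) : Set (G ⧸ Z)) = (↑) '' S := by
    refine (Set.image_mono hT.1).antisymm ?_
    rintro _ ⟨g, hg, rfl⟩
    obtain ⟨t, ⟨ht, z, hz, rfl⟩, -⟩ := hT.2 g hg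
    exact ⟨t, ht, QuotientGroup.eq.mpr (by simpa using hz)⟩
  rw [← himage, hinj.ncard_image, Set.ncard_coe_finset]

theorem nonempty (hT : IsCosetReps Z S T) (hS : S.Nonempty) : T.Nonempty := by
  obtain ⟨g, hg⟩ := hS
  obtain ⟨t, ⟨ht, -⟩, -⟩ := hT.2 g hg
  exact ⟨t, ht⟩

theorem card_eq_of_image_mul_right [Z.Normal] {S' : Set G} {T' : Finset G}
    (hT : IsCosetReps Z S T) (hT' : IsCosetReps Z S' T') {γ : G}
    (hS' : S' = (· * γ) '' S) : T'.card = T.card := by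
  rw [hT.card_eq_ncard_image_mk, hT'.card_eq_ncard_image_mk, hS', Set.image_image]
  simp only [QuotientGroup.mk_mul]
  rw [← Set.image_image (· * (γ : G ⧸ Z)) (↑) S,
    Set.ncard_image_of_injective _ (mul_left_injective _)]

end IsCosetReps

end CosetReps

section QuaternionicForms

variable {F : Type*} [Field F] [NumberField F] {a b : F} {R : Subring ℍ[F, a, b]}

theorem mem_Uhat_iff {u : (Bhat F a b)ˣ} :
    u ∈ Uhat R ↔ (u : Bhat F a b) ∈ Rhat R ∧ (↑u⁻¹ : Bhat F a b) ∈ Rhat R := by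
  constructor
  · rintro ⟨w, rfl⟩
    exact ⟨(w : Rhat R).2, by rw [← map_inv]; exact (↑w⁻¹ : Rhat R).2⟩
  · rintro ⟨hu, hu_inv⟩
    exact ⟨⟨⟨u, hu⟩, ⟨↑u⁻¹, hu_inv⟩, Subtype.ext (by simp), Subtype.ext (by simp)⟩, rfl⟩

theorem one_mem_gammaSet (x : (Bhat F a b)ˣ) : 1 ∈ GammaSet R x x :=
  ⟨1, one_mem _, by simp⟩

theorem mul_mem_gammaSet {x y z : (Bhat F a b)ˣ} {γ₁ γ₂ : ℍ[F, a, b]ˣ}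
    (h₁ : γ₁ ∈ GammaSet R x y) (h₂ : γ₂ ∈ GammaSet R y z) : γ₁ * γ₂ ∈ GammaSet R x z := by
  obtain ⟨u₁, hu₁, hγ₁⟩ := h₁
  obtain ⟨u₂, hu₂, hγ₂⟩ := h₂
  exact ⟨u₁ * u₂, mul_mem hu₁ hu₂, by rw [map_mul, hγ₁, hγ₂]; group⟩

theorem inv_mem_gammaSet {x y : (Bhat F a b)ˣ} {γ : ℍ[F, a, b]ˣ}
    (h : γ ∈ GammaSet R x y) : γ⁻¹ ∈ GammaSet R y x := by
  obtain ⟨u, hu, hγ⟩ := h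
  exact ⟨u⁻¹, inv_mem hu, by rw [map_inv, hγ]; group⟩

theorem gammaSet_eq_image_mul_right {x y : (Bhat F a b)ˣ} {γ : ℍ[F, a, b]ˣ}
    (hγ : γ ∈ GammaSet R x y) : GammaSet R x y = (· * γ) '' GammaSet R x x := by
  refine subset_antisymm ?_ ?_
  · intro γ' hγ'
    exact ⟨γ' * γ⁻¹, mul_mem_gammaSet hγ' (inv_mem_gammaSet hγ), inv_mul_cancel_right γ' γ⟩
  · rintro _ ⟨δ, hδ, rfl⟩
    exact mul_mem_gammaSet hδ hγ

theorem gammaSet_nonempty_iff {x y : (Bhat F a b)ˣ} :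
    (GammaSet R x y).Nonempty ↔ ∃ u ∈ Uhat R, ∃ γ : ℍ[F, a, b]ˣ, y = u * x * gmap F a b γ := by
  constructor
  · rintro ⟨γ, u, hu, hγ⟩
    exact ⟨u⁻¹, inv_mem hu, γ, by rw [hγ]; group⟩
  · rintro ⟨u, hu, γ, rfl⟩
    exact ⟨γ, u⁻¹, inv_mem hu, by group⟩

theorem val_gmap (γ : ℍ[F, a, b]ˣ) :
    ((gmap F a b γ : (Bhat F a b)ˣ) : Bhat F a b) = iotaB F a b γ := rfl

theorem rxUnits_eq_gammaSet (x : (Bhat F a b)ˣ) : RxUnits R x = GammaSet R x x := by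
  ext δ
  constructor
  · rintro ⟨⟨r, hr, hδ⟩, ⟨s, hs, hδ_inv⟩⟩
    refine ⟨x * gmap F a b δ * x⁻¹, mem_Uhat_iff.mpr ⟨?_, ?_⟩, by group⟩
    · simpa [val_gmap, hδ, mul_assoc] using hr
    · simpa [← map_inv, val_gmap, hδ_inv, mul_assoc] using hs
  · rintro ⟨w, hw, hδ⟩
    have hδ_inv : gmap F a b δ⁻¹ = x⁻¹ * w⁻¹ * x := by rw [map_inv, hδ]; group
    rw [mem_Uhat_iff] at hw
    exact ⟨⟨w, hw.1, congrArg Units.val hδ⟩, ⟨↑w⁻¹, hw.2, congrArg Units.val hδ_inv⟩⟩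

theorem IsStabReps.card_pos {x : (Bhat F a b)ˣ} {T : Finset ℍ[F, a, b]ˣ}
    (hT : IsStabReps R x T) : 0 < T.card :=
  (IsCosetReps.nonempty hT ⟨1, rxUnits_eq_gammaSet x ▸ one_mem_gammaSet x⟩).card_pos

theorem ounitsB_le_center : OunitsB F a b ≤ Subgroup.center ℍ[F, a, b]ˣ := by
  rintro _ ⟨c, rfl⟩
  exact Subgroup.mem_center_iff.mpr fun g => Units.ext (Algebra.commutes _ (g : ℍ[F, a, b])).symm

instance : (OunitsB F a b).Normal :=
  ⟨fun n hn g => by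
    rwa [Subgroup.mem_center_iff.mp (ounitsB_le_center hn) g, mul_inv_cancel_right]⟩

variable {V : Type*} {act : V → ℍ[F, a, b]ˣ → V}

theorem IsQMF.act_eq_of_mem_gammaSet {φ : (Bhat F a b)ˣ → V} (hφ : IsQMF R act φ)
    {x y : (Bhat F a b)ˣ} {γ : ℍ[F, a, b]ˣ} (hγ : γ ∈ GammaSet R x y) : act (φ x) γ = φ y := by
  obtain ⟨u, hu, hγ⟩ := hγ
  rw [← hφ u⁻¹ (inv_mem hu) γ x, hγ]
  congr 1
  group

variable [AddCommGroup V]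

theorem IsPhi.apply_eq_zero {x y : (Bhat F a b)ˣ} {v : V} {Φ : (Bhat F a b)ˣ → V}
    (hΦ : IsPhi R act x v Φ) (h : GammaSet R x y = ∅) : Φ y = 0 := by
  obtain ⟨T, hT, hΦy⟩ := hΦ y
  have hT_empty : T = ∅ := Finset.coe_eq_empty.mp (Set.subset_empty_iff.mp (h ▸ hT.1))
  rw [hΦy, hT_empty, Finset.sum_empty]

theorem IsPhi.apply_eq_card_smul {φ Φ : (Bhat F a b)ˣ → V} {x y : (Bhat F a b)ˣ}
    {T : Finset ℍ[F, a, b]ˣ} {γ : ℍ[F, a, b]ˣ} (hΦ : IsPhi R act x (φ x) Φ)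
    (hφ : IsQMF R act φ) (hT : IsStabReps R x T) (hγ : γ ∈ GammaSet R x y) :
    Φ y = T.card • φ y := by
  obtain ⟨T', hT', hΦy⟩ := hΦ y
  have hcard : T'.card = T.card := by
    refine IsCosetReps.card_eq_of_image_mul_right (S := RxUnits R x) (γ := γ) hT hT' ?_
    rw [rxUnits_eq_gammaSet]
    exact gammaSet_eq_image_mul_right hγ
  rw [hΦy, Finset.sum_congr rfl fun γ' hγ' => hφ.act_eq_of_mem_gammaSet (hT'.1 hγ'),
    Finset.sum_const, hcard]

end QuaternionicForms

theorem statement_9_general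
    {F : Type*} [Field F] [NumberField F]
    {a b : F}
    (R : Subring ℍ[F, a, b])
    {V : Type*} [AddCommGroup V] [Module ℂ V]
    (act : V → ℍ[F, a, b]ˣ → V)

    (φ : (Bhat F a b)ˣ → V) (hφ : IsQMF R act φ)
    (xs : Finset (Bhat F a b)ˣ) (hcl : IsClassReps R xs)
    (Tx : (Bhat F a b)ˣ → Finset ℍ[F, a, b]ˣ)
    (hTx : ∀ x ∈ xs, IsStabReps R x (Tx x))
    (φs : (Bhat F a b)ˣ → (Bhat F a b)ˣ → V)
    (hφs : ∀ x ∈ xs, IsPhi R act x (φ x) (φs x)) :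
    ∀ y : (Bhat F a b)ˣ, φ y = ∑ x ∈ xs, ((Tx x).card : ℂ)⁻¹ • φs x y := by
  intro y
  obtain ⟨x₀, ⟨hx₀, hy⟩, huniq⟩ := hcl y
  obtain ⟨γ, hγ⟩ := gammaSet_nonempty_iff.mpr hy
  have hcard : ((Tx x₀).card : ℂ) ≠ 0 := Nat.cast_ne_zero.mpr (hTx x₀ hx₀).card_pos.ne'
  rw [Finset.sum_eq_single_of_mem x₀ hx₀ fun x hx hne => ?_,
    (hφs x₀ hx₀).apply_eq_card_smul hφ (hTx x₀ hx₀) hγ, ← Nat.cast_smul_eq_nsmul ℂ,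
    inv_smul_smul₀ hcard]
  have hempty : GammaSet R x y = ∅ :=
    Set.not_nonempty_iff_eq_empty.mp fun h => hne (huniq x ⟨hx, gammaSet_nonempty_iff.mp h⟩)
  rw [(hφs x hx).apply_eq_zero hempty, smul_zero]

/-- every quaternionic modular form is a combination
`φ = Σ_{x ∈ Cl(R)} (1/t_x) φ_{x, φ(x)}` of the forms with minimal support. -/
theorem statement_9
    {F : Type*} [Field F] [NumberField F]
    (htr : ∀ φ : F →+* ℂ, ∀ x : F, (φ x).im = 0)
    {a b : F} (ha0 : a ≠ 0) (hb0 : b ≠ 0)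
    (ha : ∀ τ : F →+* ℝ, τ a < 0) (hb : ∀ τ : F →+* ℝ, τ b < 0)
    (R : Subring ℍ[F, a, b])
    (hRO : ∀ c : NumberField.RingOfIntegers F,
      algebraMap F ℍ[F, a, b] (algebraMap (NumberField.RingOfIntegers F) F c) ∈ R)
    (hRfg : (Submodule.span (NumberField.RingOfIntegers F) (R : Set ℍ[F, a, b])).FG)
    (hRspan : Submodule.span F (R : Set ℍ[F, a, b]) = ⊤)
    {V : Type*} [AddCommGroup V] [Module ℂ V]
    (act : V → ℍ[F, a, b]ˣ → V) (hact : IsWeightRep F a b act)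

    (φ : (Bhat F a b)ˣ → V) (hφ : IsQMF R act φ)
    (xs : Finset (Bhat F a b)ˣ) (hcl : IsClassReps R xs)
    (Tx : (Bhat F a b)ˣ → Finset ℍ[F, a, b]ˣ)
    (hTx : ∀ x ∈ xs, IsStabReps R x (Tx x))
    (hfin : ∀ x ∈ xs, ∀ y : (Bhat F a b)ˣ, ∃ T : Finset ℍ[F, a, b]ˣ, IsGammaReps R x y T)
    (φs : (Bhat F a b)ˣ → (Bhat F a b)ˣ → V)
    (hφs : ∀ x ∈ xs, IsPhi R act x (φ x) (φs x)) :
    ∀ y : (Bhat F a b)ˣ, φ y = ∑ x ∈ xs, ((Tx x).card : ℂ)⁻¹ • φs x y :=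
  statement_9_general R act φ hφ xs hcl Tx hTx φs hφs
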